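/- Let G=(V,E) be a finite simple graph on n vertices and let α be the cardinality of a maximum independent set of G. For any edge weight w:E→(0,∞) and vertex measure μ:V→(0,∞): α ≤ min_σ #{k∈{1,…,n} : L_k((G,σ))=0}, where the minimum is taken over all signatures σ:E→{+1,−1}. -/

import Mathlib

open Filter Topology Polynomial
open scoped Classical

noncomputable section

variable {V : Type} [Fintype V] [DecidableEq V]

/-- Sum of a (symmetric) summand over the unordered edges of `G`. -/
def sgEdgeSum (G : SimpleGraph V) (F : V → V → ℝ) : ℝ :=
  (∑ i : V, ∑ j : V, if G.Adj i j then F i j else 0) / 2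

/-- The Rayleigh quotient `R_p^σ` of the signed graph `p`-Laplacian with
edge weight `w`, signature `sgn`, vertex measure `μ` and potential `κ`. -/
def sgRayleigh (G : SimpleGraph V) (w sgn : V → V → ℝ) (μ κ : V → ℝ)
    (p : ℝ) (f : V → ℝ) : ℝ :=
  (sgEdgeSum G (fun i j => w i j * |f i - sgn i j * f j| ^ p) +
      ∑ i : V, κ i * |f i| ^ p) /
    ∑ i : V, μ i * |f i| ^ p

/-- The unit sphere `S_p` of `ℓ^p(μ)`. -/
def pSphere (μ : V → ℝ) (p : ℝ) : Set (V → ℝ) :=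
  {f | ∑ i : V, μ i * |f i| ^ p = 1}

/-- There is an odd continuous map from `B` into `ℝ^m ∖ {0}`. -/
def hasOddMapInto (B : Set (V → ℝ)) (m : ℕ) : Prop :=
  ∃ h : (V → ℝ) → (Fin m → ℝ),
    ContinuousOn h B ∧ (∀ x ∈ B, h x ≠ 0) ∧ (∀ x ∈ B, h (-x) = -(h x))

/-- The Krasnoselskii genus of `B` is at least `k`. -/
def genusGe (B : Set (V → ℝ)) (k : ℕ) : Prop :=
  ∀ m, m < k → ¬ hasOddMapInto B m

/-- The family `F_k(S_p)` of closed symmetric subsets of the sphere `S_p`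
with Krasnoselskii genus at least `k`. -/
def genusFamily (μ : V → ℝ) (p : ℝ) (k : ℕ) : Set (Set (V → ℝ)) :=
  {B | B ⊆ pSphere μ p ∧ IsClosed B ∧ (∀ x ∈ B, -x ∈ B) ∧ genusGe B k}

/-- The `k`-th variational eigenvalue `λ_k^{(p)}` of the signed graph `p`-Laplacian. -/
def varEig (G : SimpleGraph V) (w sgn : V → V → ℝ) (μ κ : V → ℝ)
    (p : ℝ) (k : ℕ) : ℝ :=
  sInf ((fun B => sSup (sgRayleigh G w sgn μ κ p '' B)) '' genusFamily μ p k)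

/-- The `k`-th smallest real root (1-indexed, counted with multiplicity) of the
characteristic polynomial of `A`; for a matrix with real spectrum this is the
`k`-th eigenvalue `λ_k(A)` in the ordering `λ_1 ≤ … ≤ λ_n`. -/
def eigval {m : Type} [Fintype m] [DecidableEq m] (A : Matrix m m ℝ) (k : ℕ) : ℝ :=
  (Multiset.sort A.charpoly.roots (· ≤ ·)).getD (k - 1) 0

/-- The normalized adjacency matrix `A^μ_{-Γ}` of the negation of the signed graph
`(H, sgn)` with edge weight `w` and vertex measure `μ`. -/
def negAdj (H : SimpleGraph V) (w sgn : V → V → ℝ) (μ : V → ℝ) : Matrix V V ℝ :=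
  fun i j => if H.Adj i j then -(sgn i j) * w i j / μ i else 0

/-- The normalized adjacency matrix `A^μ_{-Γ₀}` of the negation of the subgraph of
`(H, sgn)` with vertex set `s`, with restricted edge weight and vertex measure. -/
def negAdjSub (H : SimpleGraph V) (s : Finset V) (w sgn : V → V → ℝ) (μ : V → ℝ) :
    Matrix {x // x ∈ s} {x // x ∈ s} ℝ :=
  fun i j => if H.Adj ↑i ↑j then -(sgn ↑i ↑j) * w ↑i ↑j / μ ↑i else 0

/-- The subgraph of `G` induced on the vertex set `s`. -/
def inducedGraph (G : SimpleGraph V) (s : Finset V) : SimpleGraph {x // x ∈ s} where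
  Adj i j := G.Adj ↑i ↑j
  symm := ⟨fun _ _ h => G.adj_symm h⟩
  loopless := ⟨fun i h => G.loopless.irrefl ↑i h⟩

/-- `G` has an edge cover of cardinality `m`. -/
def edgeCoverCard {α : Type} (G : SimpleGraph α) (m : ℕ) : Prop :=
  ∃ C : Finset (Sym2 α), (C : Set (Sym2 α)) ⊆ G.edgeSet ∧
    (∀ v : α, ∃ e ∈ C, v ∈ e) ∧ C.card = m

end

open Set

/-!
It suffices that `λ_k^{(p)}` stays bounded as `p → ∞` for `1 ≤ k ≤ α`. From below, `|f_i|^p ≤ 1/μ_i`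
on `S_p` gives `R_p^σ ≥ -∑ |κ_i|/μ_i`. From above, take an independent set `t` of size `α`: for `f`
supported in `t` each edge term has at most one nonzero endpoint, so
`R_p^σ(f) ≤ ∑_{ij} w_ij (1/μ_i + 1/μ_j) + ∑ |κ_i|/μ_i` uniformly in `p`. Either the unit sphere of
`ℝ^t` has genus `≥ k`, and this bounds `λ_k^{(p)}`, or an odd map sends it to `ℝ^m ∖ {0}` with
`m < k`; suspending that map one coordinate at a time and composing with `ℝ^{m+1} ↪ ℝ^t` extends it
to `ℝ^V ∖ {0}`, so `F_k(S_p) = ∅` and `λ_k^{(p)} = sInf ∅ = 0`. No Borsuk–Ulam is needed.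
-/

section RadialRescale

variable {E F : Type*} [NormedAddCommGroup E] [NormedAddCommGroup F] [NormedSpace ℝ F]

noncomputable def radialRescale (H : E → F) (x : E) : F := ‖x‖ • ‖H x‖⁻¹ • H x

theorem radialRescale_neg {H : E → F} {x : E} (hH : H (-x) = -H x) :
    radialRescale H (-x) = -radialRescale H x := by
  rw [radialRescale, radialRescale, hH, norm_neg, norm_neg, smul_neg, smul_neg]

theorem norm_radialRescale_le (H : E → F) (x : E) : ‖radialRescale H x‖ ≤ ‖x‖ := by
  rw [radialRescale, norm_smul, norm_smul, norm_norm, norm_inv, norm_norm]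
  by_cases h0 : H x = 0
  · simp [h0]
  · rw [inv_mul_cancel₀ (norm_ne_zero_iff.2 h0), mul_one]

theorem radialRescale_ne_zero {H : E → F} {x : E} (hx : ‖x‖ ≠ 0) (hH : H x ≠ 0) :
    radialRescale H x ≠ 0 :=
  smul_ne_zero hx (smul_ne_zero (inv_ne_zero (norm_ne_zero_iff.2 hH)) hH)

theorem continuousOn_radialRescale {H : E → F} {D : Set E} (hc : ContinuousOn H (D \ {0}))
    (hne : ∀ x ∈ D \ {0}, H x ≠ 0) : ContinuousOn (radialRescale H) D := by
  intro x hx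
  by_cases hx0 : x = 0
  · subst hx0
    have hlim : Tendsto (radialRescale H) (𝓝[D] 0) (𝓝 0) :=
      squeeze_zero_norm (norm_radialRescale_le H)
        (by simpa using (continuous_norm.tendsto (0 : E)).mono_left nhdsWithin_le_nhds)
    simpa [ContinuousWithinAt, radialRescale] using hlim
  · have hcont : ContinuousOn (radialRescale H) (D \ {0}) :=
      continuous_norm.continuousOn.smul
        ((hc.norm.inv₀ fun y hy => norm_ne_zero_iff.2 (hne y hy)).smul hc)
    exact continuousWithinAt_sdiff_singleton.1 (hcont x ⟨hx, hx0⟩)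

end RadialRescale

section OddMaps

variable {V : Type}

def supportedIn (s : Finset V) : Set (V → ℝ) := {f | ∀ v ∉ s, f v = 0}

theorem isClosed_supportedIn (s : Finset V) : IsClosed (supportedIn s) := by
  simp only [supportedIn, ofPred_forall]
  exact isClosed_iInter fun v => isClosed_iInter fun _ =>
    isClosed_eq (continuous_apply v) continuous_const

theorem hasOddMapInto_empty (m : ℕ) : hasOddMapInto (∅ : Set (V → ℝ)) m :=
  ⟨0, continuousOn_empty _, by simp, by simp⟩

theorem hasOddMapInto.comp {A B : Set (V → ℝ)} {m : ℕ} (hB : hasOddMapInto B m)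
    {J : (V → ℝ) → V → ℝ} (hJc : ContinuousOn J A) (hJ : MapsTo J A B)
    (hJodd : ∀ x ∈ A, J (-x) = -J x) : hasOddMapInto A m := by
  obtain ⟨h, hc, hne, hodd⟩ := hB
  refine ⟨h ∘ J, hc.comp hJc hJ, fun x hx => hne _ (hJ hx), fun x hx => ?_⟩
  simp only [Function.comp_apply, hJodd x hx, hodd _ (hJ hx)]

theorem hasOddMapInto.mono {A B : Set (V → ℝ)} {m : ℕ} (hB : hasOddMapInto B m) (hAB : A ⊆ B) :
    hasOddMapInto A m :=
  hB.comp continuousOn_id hAB fun _ _ => rfl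

/-- Suspension: `(f_a, f|_s)` is sent to `(f_a, H f|_s)`, rescaled to keep it continuous. -/
theorem hasOddMapInto_insert [Fintype V] [DecidableEq V] {s : Finset V} {m : ℕ} (a : V)
    (h : hasOddMapInto (supportedIn s \ {0}) m) :
    hasOddMapInto (supportedIn (insert a s) \ {0}) (m + 1) := by
  obtain ⟨H, hc, hne, hodd⟩ := h
  have hres : MapsTo (Function.update · a 0) (supportedIn (insert a s)) (supportedIn s) := by
    intro f hf v hv
    by_cases hva : v = a
    · simp [hva]
    · simp [hva, hf v (by simp [hva, hv])]
  have hres_neg (f : V → ℝ) : Function.update (-f) a 0 = -Function.update f a 0 := by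
    funext v; by_cases hva : v = a <;> simp [hva]
  refine ⟨fun f => Matrix.vecCons (f a) (radialRescale H (Function.update f a 0)), ?_, ?_, ?_⟩
  · refine ((continuous_apply a).continuousOn.matrixVecCons ?_).mono sdiff_subset
    exact (continuousOn_radialRescale hc hne).comp
      (continuous_id.update a continuous_const).continuousOn hres
  · rintro f ⟨hf, hf0⟩
    by_cases hfa : f a = 0
    · have hupd : Function.update f a 0 = f := by simp [← hfa]
      simpa [hupd, hfa] using radialRescale_ne_zero (norm_ne_zero_iff.2 hf0)
        (hne f ⟨hupd ▸ hres hf, hf0⟩)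
    · simp [hfa]
  · rintro f ⟨hf, -⟩
    have hupd : radialRescale H (Function.update (-f) a 0) =
        -radialRescale H (Function.update f a 0) := by
      rw [hres_neg]
      by_cases h0 : Function.update f a 0 = 0
      · simp [h0, radialRescale]
      · exact radialRescale_neg (hodd _ ⟨hres hf, h0⟩)
    simp [hupd]

theorem hasOddMapInto.of_le_card {t : Finset V} {m k : ℕ}
    (ht : hasOddMapInto (supportedIn t \ {0}) m) (hk : k ≤ t.card) {A : Set (V → ℝ)}
    (hA : hasOddMapInto A k) : hasOddMapInto A m := by
  obtain ⟨h, hc, hne, hodd⟩ := hA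
  let ι : Fin k → V := fun i => t.equivFin.symm (Fin.castLE hk i)
  have hι : Function.Injective ι := fun i j hij =>
    Fin.castLE_injective hk (t.equivFin.symm.injective (Subtype.ext hij))
  let embed := Function.ExtendByZero.linearMap ℝ ι
  refine ht.comp (J := embed ∘ h) (embed.continuous_of_finiteDimensional.comp_continuousOn hc)
    (fun x hx => ⟨?_, ?_⟩) fun x hx => by simp [hodd x hx]
  · intro v hv
    refine Function.extend_apply' _ _ _ ?_
    rintro ⟨i, rfl⟩
    exact hv (t.equivFin.symm _).2
  · exact fun h0 => hne x hx
      ((injective_iff_map_eq_zero embed).1 (Function.extend_injective hι 0) _ h0)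

end OddMaps

section PSphere

variable {V : Type} [Fintype V] {μ : V → ℝ} {p : ℝ} {f : V → ℝ}

noncomputable def pMass (μ : V → ℝ) (p : ℝ) (f : V → ℝ) : ℝ := ∑ i : V, μ i * |f i| ^ p

theorem mem_pSphere_iff : f ∈ pSphere μ p ↔ pMass μ p f = 1 := Iff.rfl

theorem continuous_pMass (μ : V → ℝ) (hp : 0 < p) : Continuous (pMass μ p) :=
  continuous_finsetSum _ fun i _ => continuous_const.mul
    ((continuous_abs.comp (continuous_apply i)).rpow_const fun _ => Or.inr hp.le)

theorem pMass_smul (μ : V → ℝ) (p c : ℝ) (f : V → ℝ) :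
    pMass μ p (c • f) = |c| ^ p * pMass μ p f := by
  simp only [pMass, Finset.mul_sum, Pi.smul_apply, smul_eq_mul, abs_mul,
    Real.mul_rpow (abs_nonneg c) (abs_nonneg _)]
  exact Finset.sum_congr rfl fun i _ => by ring

theorem pMass_neg (μ : V → ℝ) (p : ℝ) (f : V → ℝ) : pMass μ p (-f) = pMass μ p f := by
  simp [pMass]

theorem pMass_pos (hμ : ∀ i, 0 < μ i) (hf : f ≠ 0) : 0 < pMass μ p f := by
  obtain ⟨v, hv⟩ := Function.ne_iff.1 hf
  refine Finset.sum_pos' (fun i _ => mul_nonneg (hμ i).le (by positivity))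
    ⟨v, Finset.mem_univ v, mul_pos (hμ v) (Real.rpow_pos_of_pos (abs_pos.2 hv) _)⟩

theorem zero_notMem_pSphere (μ : V → ℝ) (hp : p ≠ 0) : (0 : V → ℝ) ∉ pSphere μ p := by
  simp [pSphere, Real.zero_rpow hp]

theorem isClosed_pSphere (μ : V → ℝ) (hp : 0 < p) : IsClosed (pSphere μ p) :=
  isClosed_singleton.preimage (continuous_pMass μ hp)

theorem abs_rpow_le_inv_of_mem_pSphere (hμ : ∀ i, 0 < μ i) (hf : f ∈ pSphere μ p)
    (i : V) : |f i| ^ p ≤ (μ i)⁻¹ := by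
  have hi : μ i * |f i| ^ p ≤ 1 := hf ▸ Finset.single_le_sum (f := fun j => μ j * |f j| ^ p)
    (fun j _ => mul_nonneg (hμ j).le (by positivity)) (Finset.mem_univ i)
  rwa [← le_div_iff₀' (hμ i), one_div] at hi

theorem abs_le_rpow_inv_of_mem_pSphere (hμ : ∀ i, 0 < μ i) (hp : 0 < p) (hf : f ∈ pSphere μ p)
    (i : V) : |f i| ≤ (μ i)⁻¹ ^ p⁻¹ :=
  (Real.le_rpow_inv_iff_of_pos (abs_nonneg _) (inv_nonneg.2 (hμ i).le) hp).2
    (abs_rpow_le_inv_of_mem_pSphere hμ hf i)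

theorem nonempty_of_mem_genusFamily {k : ℕ} (hk : 0 < k) {B : Set (V → ℝ)}
    (hB : B ∈ genusFamily μ p k) : B.Nonempty :=
  nonempty_iff_ne_empty.2 fun h0 => hB.2.2.2 0 hk (h0 ▸ hasOddMapInto_empty 0)

theorem hasOddMapInto_sdiff_zero_of_pSphere_inter (hμ : ∀ i, 0 < μ i) (hp : 0 < p)
    {C : Set (V → ℝ)} (hC : ∀ c : ℝ, 0 < c → ∀ x ∈ C, c • x ∈ C) {m : ℕ}
    (h : hasOddMapInto (pSphere μ p ∩ C) m) : hasOddMapInto (C \ {0}) m := by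
  refine h.comp (J := fun f => pMass μ p f ^ (-p⁻¹) • f) ?_ ?_ fun f _ => by simp [pMass_neg]
  · exact ((continuous_pMass μ hp).continuousOn.rpow_const
      fun f hf => Or.inl (pMass_pos hμ hf.2).ne').smul continuousOn_id
  · rintro f ⟨hf, hf0⟩
    have hpos : 0 < pMass μ p f := pMass_pos hμ hf0
    refine ⟨?_, hC _ (Real.rpow_pos_of_pos hpos _) f hf⟩
    rw [mem_pSphere_iff, pMass_smul, abs_of_pos (Real.rpow_pos_of_pos hpos _),
      ← Real.rpow_mul hpos.le, neg_mul, inv_mul_cancel₀ hp.ne', Real.rpow_neg_one,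
      inv_mul_cancel₀ hpos.ne']

end PSphere

section Genus

variable {V : Type} [Fintype V] [DecidableEq V] {μ : V → ℝ} {p : ℝ}

theorem hasOddMapInto.compl_zero_of_lt_card {t : Finset V} {m : ℕ}
    (ht : hasOddMapInto (supportedIn t \ {0}) m) (hm : m < t.card) :
    hasOddMapInto ({0}ᶜ : Set (V → ℝ)) m := by
  have hall (s : Finset V) : hasOddMapInto (supportedIn s \ {0}) m := by
    induction s using Finset.induction_on with
    | empty =>
      refine (hasOddMapInto_empty m).mono fun f ⟨hf, hf0⟩ => hf0 ?_
      exact funext fun v => hf v (Finset.notMem_empty v)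
    | insert a s _ ih => exact ht.of_le_card hm (hasOddMapInto_insert a ih)
  exact (hall Finset.univ).mono fun f hf => ⟨fun v hv => absurd (Finset.mem_univ v) hv, hf⟩

theorem pSphere_inter_supportedIn_mem_genusFamily_or_eq_empty (hμ : ∀ i, 0 < μ i) (hp : 0 < p)
    {t : Finset V} {k : ℕ} (hk : k ≤ t.card) :
    pSphere μ p ∩ supportedIn t ∈ genusFamily μ p k ∨ genusFamily μ p k = ∅ := by
  by_cases hg : genusGe (pSphere μ p ∩ supportedIn t) k
  · refine Or.inl ⟨inter_subset_left, (isClosed_pSphere μ hp).inter (isClosed_supportedIn t),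
      fun f hf => ⟨?_, fun v hv => by simp [hf.2 v hv]⟩, hg⟩
    rw [mem_pSphere_iff, pMass_neg]
    exact hf.1
  obtain ⟨m, hmk, hm⟩ : ∃ m < k, hasOddMapInto (pSphere μ p ∩ supportedIn t) m := by
    simpa [genusGe] using hg
  have hext : hasOddMapInto ({0}ᶜ : Set (V → ℝ)) m :=
    (hasOddMapInto_sdiff_zero_of_pSphere_inter hμ hp 
      (C := supportedIn t) (fun c _ f hf v hv => by simp [hf v hv])
      hm).compl_zero_of_lt_card (hmk.trans_le hk)
  refine Or.inr (eq_empty_of_forall_notMem fun B hB => hB.2.2.2 m hmk (hext.mono ?_))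
  exact fun f hf h0 => zero_notMem_pSphere μ hp.ne' (h0 ▸ hB.1 hf)

end Genus

section Rayleigh

variable {V : Type} [Fintype V] {G : SimpleGraph V} {w sgn : V → V → ℝ} {μ κ : V → ℝ} {p : ℝ}
  {f : V → ℝ} {k : ℕ}

theorem sgEdgeSum_le_sgEdgeSum {F F' : V → V → ℝ} (h : ∀ i j, G.Adj i j → F i j ≤ F' i j) :
    sgEdgeSum G F ≤ sgEdgeSum G F' := by
  unfold sgEdgeSum
  gcongr with i _ j _
  split_ifs with hij
  exacts [h i j hij, le_rfl]

theorem sgEdgeSum_nonneg {F : V → V → ℝ} (h : ∀ i j, G.Adj i j → 0 ≤ F i j) :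
    0 ≤ sgEdgeSum G F := by
  simpa [sgEdgeSum] using sgEdgeSum_le_sgEdgeSum (F := 0) h

theorem sgRayleigh_of_mem_pSphere (hf : f ∈ pSphere μ p) :
    sgRayleigh G w sgn μ κ p f =
      sgEdgeSum G (fun i j => w i j * |f i - sgn i j * f j| ^ p) + ∑ i, κ i * |f i| ^ p := by
  rw [sgRayleigh, show ∑ i, μ i * |f i| ^ p = 1 from hf, div_one]

theorem abs_sum_potential_le (hμ : ∀ i, 0 < μ i) (hf : f ∈ pSphere μ p) :
    |∑ i, κ i * |f i| ^ p| ≤ ∑ i, |κ i| / μ i := by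
  refine (Finset.abs_sum_le_sum_abs _ _).trans (Finset.sum_le_sum fun i _ => ?_)
  rw [abs_mul, abs_of_nonneg (by positivity : 0 ≤ |f i| ^ p), div_eq_mul_inv]
  exact mul_le_mul_of_nonneg_left (abs_rpow_le_inv_of_mem_pSphere hμ hf i) (abs_nonneg _)

theorem neg_le_sgRayleigh (hμ : ∀ i, 0 < μ i) (hw : ∀ i j, G.Adj i j → 0 ≤ w i j)
    (hf : f ∈ pSphere μ p) : -∑ i, |κ i| / μ i ≤ sgRayleigh G w sgn μ κ p f := by
  rw [sgRayleigh_of_mem_pSphere hf]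
  have hedge : 0 ≤ sgEdgeSum G (fun i j => w i j * |f i - sgn i j * f j| ^ p) :=
    sgEdgeSum_nonneg fun i j hij => mul_nonneg (hw i j hij) (by positivity)
  linarith [(abs_le.1 (abs_sum_potential_le (κ := κ) hμ hf)).1]

theorem bddAbove_sgRayleigh_image_pSphere (hμ : ∀ i, 0 < μ i) (hp : 0 < p)
    (hw : ∀ i j, G.Adj i j → 0 ≤ w i j) :
    BddAbove (sgRayleigh G w sgn μ κ p '' pSphere μ p) := by
  refine ⟨sgEdgeSum G (fun i j => w i j * ((μ i)⁻¹ ^ p⁻¹ + |sgn i j| * (μ j)⁻¹ ^ p⁻¹) ^ p) +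
    ∑ i, |κ i| / μ i, ?_⟩
  rintro _ ⟨f, hf, rfl⟩
  rw [sgRayleigh_of_mem_pSphere hf]
  gcongr ?_ + ?_
  · refine sgEdgeSum_le_sgEdgeSum fun i j hij => mul_le_mul_of_nonneg_left ?_ (hw i j hij)
    refine Real.rpow_le_rpow (abs_nonneg _) ?_ hp.le
    calc |f i - sgn i j * f j| ≤ |f i| + |sgn i j| * |f j| := by
          rw [← abs_mul]; exact abs_sub _ _
      _ ≤ _ := by gcongr <;> exact abs_le_rpow_inv_of_mem_pSphere hμ hp hf _
  · exact le_of_abs_le (abs_sum_potential_le hμ hf)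

theorem neg_le_sSup_sgRayleigh_image (hμ : ∀ i, 0 < μ i) (hp : 0 < p)
    (hw : ∀ i j, G.Adj i j → 0 ≤ w i j) (hk : 0 < k) {B : Set (V → ℝ)}
    (hB : B ∈ genusFamily μ p k) :
    -∑ i, |κ i| / μ i ≤ sSup (sgRayleigh G w sgn μ κ p '' B) := by
  obtain ⟨f, hf⟩ := nonempty_of_mem_genusFamily hk hB
  exact (neg_le_sgRayleigh hμ hw (hB.1 hf)).trans <|
    le_csSup ((bddAbove_sgRayleigh_image_pSphere hμ hp hw).mono (image_mono hB.1))
      (mem_image_of_mem _ hf)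

/-- On a function supported in an independent set, each edge sees at most one nonzero value. -/
theorem sgRayleigh_le_of_isIndepSet (hμ : ∀ i, 0 < μ i) (hp : 0 ≤ p)
    (hw : ∀ i j, G.Adj i j → 0 ≤ w i j) (hsgn : ∀ i j, G.Adj i j → |sgn i j| ≤ 1)
    {t : Finset V} (ht : G.IsIndepSet t) (hf : f ∈ pSphere μ p ∩ supportedIn t) :
    sgRayleigh G w sgn μ κ p f ≤
      sgEdgeSum G (fun i j => w i j * ((μ i)⁻¹ + (μ j)⁻¹)) + ∑ i, |κ i| / μ i := by
  rw [sgRayleigh_of_mem_pSphere hf.1]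
  gcongr ?_ + ?_
  · refine sgEdgeSum_le_sgEdgeSum fun i j hij => mul_le_mul_of_nonneg_left ?_ (hw i j hij)
    by_cases hi : i ∈ t
    · have hj : j ∉ t := fun hj => ht hi hj (G.ne_of_adj hij) hij
      rw [hf.2 j hj, mul_zero, sub_zero]
      exact (abs_rpow_le_inv_of_mem_pSphere hμ hf.1 i).trans
        (le_add_of_nonneg_right (inv_nonneg.2 (hμ j).le))
    · rw [hf.2 i hi, zero_sub, abs_neg, abs_mul]
      calc (|sgn i j| * |f j|) ^ p ≤ |f j| ^ p := Real.rpow_le_rpow (by positivity)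
            (mul_le_of_le_one_left (abs_nonneg _) (hsgn i j hij)) hp
        _ ≤ (μ j)⁻¹ := abs_rpow_le_inv_of_mem_pSphere hμ hf.1 j
        _ ≤ _ := le_add_of_nonneg_left (inv_nonneg.2 (hμ i).le)
  · exact le_of_abs_le (abs_sum_potential_le hμ hf.1)

theorem neg_le_varEig (hμ : ∀ i, 0 < μ i) (hp : 0 < p) (hw : ∀ i j, G.Adj i j → 0 ≤ w i j)
    (hk : 0 < k) : -∑ i, |κ i| / μ i ≤ varEig G w sgn μ κ p k :=
  Real.le_sInf (by rintro _ ⟨B, hB, rfl⟩; exact neg_le_sSup_sgRayleigh_image hμ hp hw hk hB)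
    (neg_nonpos.2 (Finset.sum_nonneg fun i _ => div_nonneg (abs_nonneg _) (hμ i).le))

variable [DecidableEq V]

theorem varEig_le_of_isIndepSet (hμ : ∀ i, 0 < μ i) (hp : 0 < p)
    (hw : ∀ i j, G.Adj i j → 0 ≤ w i j) (hsgn : ∀ i j, G.Adj i j → |sgn i j| ≤ 1)
    {t : Finset V} (ht : G.IsIndepSet t) (hk0 : 0 < k) (hk : k ≤ t.card) :
    varEig G w sgn μ κ p k ≤
      sgEdgeSum G (fun i j => w i j * ((μ i)⁻¹ + (μ j)⁻¹)) + ∑ i, |κ i| / μ i := by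
  have hbound_nonneg : 0 ≤ sgEdgeSum G (fun i j => w i j * ((μ i)⁻¹ + (μ j)⁻¹)) +
      ∑ i, |κ i| / μ i := by
    refine add_nonneg (sgEdgeSum_nonneg fun i j hij => mul_nonneg (hw i j hij) ?_)
      (Finset.sum_nonneg fun i _ => div_nonneg (abs_nonneg _) (hμ i).le)
    exact add_nonneg (inv_nonneg.2 (hμ i).le) (inv_nonneg.2 (hμ j).le)
  rcases pSphere_inter_supportedIn_mem_genusFamily_or_eq_empty hμ hp hk with hmem | hempty
  · refine (csInf_le ⟨-∑ i, |κ i| / μ i, ?_⟩ (mem_image_of_mem _ hmem)).trans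
      (Real.sSup_le ?_ hbound_nonneg)
    · rintro _ ⟨B, hB, rfl⟩
      exact neg_le_sSup_sgRayleigh_image hμ hp hw hk0 hB
    · rintro _ ⟨f, hf, rfl⟩
      exact sgRayleigh_le_of_isIndepSet hμ hp.le hw hsgn ht hf
  · simpa [varEig, hempty] using hbound_nonneg

theorem tendsto_two_rpow_neg_atTop : Tendsto (fun p : ℝ => (2 : ℝ) ^ (-p)) atTop (𝓝 0) :=
  (tendsto_rpow_atTop_of_base_lt_one (1 / 2) (by norm_num) (by norm_num)).congr fun p => by
    rw [Real.rpow_neg zero_le_two, ← Real.inv_rpow zero_le_two, one_div]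

theorem tendsto_two_rpow_neg_mul_varEig_of_isIndepSet (hμ : ∀ i, 0 < μ i)
    (hw : ∀ i j, G.Adj i j → 0 ≤ w i j) (hsgn : ∀ i j, G.Adj i j → |sgn i j| ≤ 1)
    {t : Finset V} (ht : G.IsIndepSet t) (hk0 : 0 < k) (hk : k ≤ t.card) :
    Tendsto (fun p => (2 : ℝ) ^ (-p) * varEig G w sgn μ κ p k) atTop (𝓝 0) := by
  refine tendsto_two_rpow_neg_atTop.zero_mul_isBoundedUnder_le
    (isBoundedUnder_of_eventually_le (a := max (∑ i, |κ i| / μ i)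
      (sgEdgeSum G (fun i j => w i j * ((μ i)⁻¹ + (μ j)⁻¹)) + ∑ i, |κ i| / μ i)) ?_)
  filter_upwards [eventually_gt_atTop 0] with p hp
  exact abs_le.2 ⟨(neg_le_neg (le_max_left _ _)).trans (neg_le_varEig hμ hp hw hk0),
    (varEig_le_of_isIndepSet hμ hp hw hsgn ht hk0 hk).trans (le_max_right _ _)⟩

end Rayleigh

theorem independence_number_le_zero_cutoff_count_general
    {V : Type} [Fintype V] [DecidableEq V] (n : ℕ) (hn : Fintype.card V = n)
    (G : SimpleGraph V) (w : V → V → ℝ) (μ κ : V → ℝ)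
    (hw : ∀ i j, G.Adj i j → 0 < w i j)
    (hμ : ∀ i, 0 < μ i)
    (α : ℕ)
    (hα : IsGreatest {m : ℕ | ∃ t : Finset V,
      (∀ i ∈ t, ∀ j ∈ t, ¬ G.Adj i j) ∧ t.card = m} α)
    (L : (V → V → ℝ) → ℕ → ℝ)
    (hL : ∀ sgn : V → V → ℝ,
      (∀ i j, G.Adj i j → sgn i j = 1 ∨ sgn i j = -1) →
      (∀ i j, sgn i j = sgn j i) →
      ∀ k, 1 ≤ k → k ≤ n →
        Tendsto (fun p : ℝ => (2 : ℝ) ^ (-p) * varEig G w sgn μ κ p k) atTop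
          (𝓝 (L sgn k))) :
    ∀ sgn : V → V → ℝ,
      (∀ i j, G.Adj i j → sgn i j = 1 ∨ sgn i j = -1) →
      (∀ i j, sgn i j = sgn j i) →
      α ≤ ((Finset.Icc 1 n).filter (fun k => L sgn k = 0)).card := by
  intro sgn hsgn hsgn_symm
  obtain ⟨t, ht, rfl⟩ := hα.1
  have htn : t.card ≤ n := hn ▸ t.card_le_univ
  have hsgn_abs (i j : V) (hij : G.Adj i j) : |sgn i j| ≤ 1 := by
    rcases hsgn i j hij with h | h <;> simp [h]
  have hzero : Finset.Icc 1 t.card ⊆ (Finset.Icc 1 n).filter (fun k => L sgn k = 0) := by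
    intro k hk
    obtain ⟨hk1, hkt⟩ := Finset.mem_Icc.1 hk
    refine Finset.mem_filter.2 ⟨Finset.mem_Icc.2 ⟨hk1, hkt.trans htn⟩, ?_⟩
    exact tendsto_nhds_unique (hL sgn hsgn hsgn_symm k hk1 (hkt.trans htn))
      (tendsto_two_rpow_neg_mul_varEig_of_isIndepSet hμ (fun i j hij => (hw i j hij).le)
        hsgn_abs (fun i hi j hj _ => ht i hi j hj) hk1 hkt)
  simpa using Finset.card_le_card hzero

/-- **Inertia bound for the independence number** (Theorem `thm:Inertia vertices`).
For any edge weight and vertex measure, the cardinality `α` of a maximum independent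
set satisfies `α ≤ #{k : L_k((G,σ)) = 0}` for every signature `σ`. -/
theorem independence_number_le_zero_cutoff_count
    {V : Type} [Fintype V] [DecidableEq V] (n : ℕ) (hn : Fintype.card V = n)
    (G : SimpleGraph V) (w : V → V → ℝ) (μ κ : V → ℝ)
    (hw : ∀ i j, G.Adj i j → 0 < w i j) (hwsymm : ∀ i j, w i j = w j i)
    (hμ : ∀ i, 0 < μ i)
    (α : ℕ)
    (hα : IsGreatest {m : ℕ | ∃ t : Finset V,
      (∀ i ∈ t, ∀ j ∈ t, ¬ G.Adj i j) ∧ t.card = m} α)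
    (L : (V → V → ℝ) → ℕ → ℝ)
    (hL : ∀ sgn : V → V → ℝ,
      (∀ i j, G.Adj i j → sgn i j = 1 ∨ sgn i j = -1) →
      (∀ i j, sgn i j = sgn j i) →
      ∀ k, 1 ≤ k → k ≤ n →
        Tendsto (fun p : ℝ => (2 : ℝ) ^ (-p) * varEig G w sgn μ κ p k) atTop
          (𝓝 (L sgn k))) :
    ∀ sgn : V → V → ℝ,
      (∀ i j, G.Adj i j → sgn i j = 1 ∨ sgn i j = -1) →
      (∀ i j, sgn i j = sgn j i) →
      α ≤ ((Finset.Icc 1 n).filter (fun k => L sgn k = 0)).card :=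
  independence_number_le_zero_cutoff_count_general n hn G w μ κ hw hμ α hα L hL
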